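/- Under the linear coercivity assumptions, let 𝒟 be a gradient discretisation. Then there exists one and only one u_𝒟 ∈ X_𝒟 solving the linear gradient scheme, and it satisfies the error estimates ‖Gū − G_𝒟 u_𝒟‖_𝐋 ≤ (1/α)[W_𝒟(𝐚(Gū)+𝐅) + (ᾱ(1+C_𝒟) + α) S_𝒟(ū)] and ‖ū − P_𝒟 u_𝒟‖_L ≤ (1/α)[C_𝒟 W_𝒟(𝐚(Gū)+𝐅) + (C_𝒟(1+C_𝒟)ᾱ + α) S_𝒟(ū)], where ū is the unique solution of the weak linear problem. -/

import Mathlib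

open NormedSpace Filter Topology

noncomputable section

variable {L Lv : Type*} [NormedAddCommGroup L] [NormedSpace ℝ L]
  [NormedAddCommGroup Lv] [NormedSpace ℝ Lv]

/-- The seminorm `|u|_{L,V} = sup_{μ ∈ V \ {0}} |⟨μ,u⟩| / ‖μ‖` (equal to `0` when `V = {0}`,
since `sSup ∅ = 0` in `ℝ`). -/
noncomputable def semV (V : Submodule ℝ (StrongDual ℝ L)) (u : L) : ℝ :=
  sSup ((fun μ : StrongDual ℝ L => |μ u| / ‖μ‖) '' {μ : StrongDual ℝ L | μ ∈ V ∧ μ ≠ 0})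

/-- `IsWDpair W_G G φ w` says that `φ ∈ 𝐖_D` with `D φ = w`, i.e. the abstract Stokes formula
`⟨φ, G u⟩ + ⟨w, u⟩ = 0` holds for all `u ∈ W_G`. -/
def IsWDpair (WG : Submodule ℝ L) (G : ↥WG →ₗ[ℝ] Lv) (φ : StrongDual ℝ Lv) (w : StrongDual ℝ L) : Prop :=
  ∀ u : ↥WG, φ (G u) + w (u : L) = 0

/-- A gradient discretisation `𝒟 = (X_𝒟, P_𝒟, G_𝒟)`: a finite-dimensional real vector space
`X`, a function reconstruction `P : X → L` and a gradient reconstruction `Gd : X → Lv`, such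
that `v ↦ (|P v|_{L,V}^p + ‖Gd v‖^p)^{1/p}` is a norm on `X` (definiteness is the only
non-automatic condition). -/
structure GradDisc (L Lv : Type*) [NormedAddCommGroup L] [NormedSpace ℝ L]
    [NormedAddCommGroup Lv] [NormedSpace ℝ Lv]
    (V : Submodule ℝ (StrongDual ℝ L)) (p : ℝ) where
  X : Type
  [instAddCommGroup : AddCommGroup X]
  [instModule : Module ℝ X]
  [instFin : FiniteDimensional ℝ X]
  P : X →ₗ[ℝ] L
  Gd : X →ₗ[ℝ] Lv
  dnorm_definite : ∀ v : X, (semV V (P v) ^ p + ‖Gd v‖ ^ p) ^ (1 / p) = 0 → v = 0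

attribute [instance] GradDisc.instAddCommGroup GradDisc.instModule GradDisc.instFin

namespace GradDisc

variable {V : Submodule ℝ (StrongDual ℝ L)} {p : ℝ}

/-- The discrete norm `‖v‖_𝒟 = (|P_𝒟 v|_{L,V}^p + ‖G_𝒟 v‖_Lv^p)^{1/p}`. -/
noncomputable def dnorm (D : GradDisc L Lv V p) (v : D.X) : ℝ :=
  (semV V (D.P v) ^ p + ‖D.Gd v‖ ^ p) ^ (1 / p)

/-- `C_𝒟 = max_{v ≠ 0} ‖P_𝒟 v‖_L / ‖v‖_𝒟`. -/
noncomputable def CD (D : GradDisc L Lv V p) : ℝ :=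
  sSup ((fun v : D.X => ‖D.P v‖ / D.dnorm v) '' {v : D.X | v ≠ 0})

/-- `W_𝒟(φ) = sup_{u ≠ 0} |⟨φ, G_𝒟 u⟩ + ⟨D φ, P_𝒟 u⟩| / ‖u‖_𝒟`, where `w = D φ`. -/
noncomputable def WDdef (D : GradDisc L Lv V p) (φ : StrongDual ℝ Lv) (w : StrongDual ℝ L) : ℝ :=
  sSup ((fun u : D.X => |φ (D.Gd u) + w (D.P u)| / D.dnorm u) '' {u : D.X | u ≠ 0})

/-- `S_𝒟(φ) = min_v (‖P_𝒟 v − φ‖_L + ‖G_𝒟 v − G φ‖_Lv)`, where `gφ = G φ`. -/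
noncomputable def SDdef (D : GradDisc L Lv V p) (φ : L) (gφ : Lv) : ℝ :=
  sInf (Set.range fun v : D.X => ‖D.P v - φ‖ + ‖D.Gd v - gφ‖)

end GradDisc

/-- Coercivity of a sequence of gradient discretisations: `sup_m C_{𝒟_m} < ∞`. -/
def Coercive {V : Submodule ℝ (StrongDual ℝ L)} {p : ℝ} (D : ℕ → GradDisc L Lv V p) : Prop :=
  ∃ C : ℝ, ∀ m : ℕ, (D m).CD ≤ C

/-- Limit-conformity: `W_{𝒟_m}(φ) → 0` for every `φ ∈ 𝐖_D` (with `w = D φ`). -/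
def LimitConforming (WG : Submodule ℝ L) (G : ↥WG →ₗ[ℝ] Lv)
    {V : Submodule ℝ (StrongDual ℝ L)} {p : ℝ} (D : ℕ → GradDisc L Lv V p) : Prop :=
  ∀ (φ : StrongDual ℝ Lv) (w : StrongDual ℝ L), IsWDpair WG G φ w →
    Filter.Tendsto (fun m => (D m).WDdef φ w) Filter.atTop (𝓝 0)

/-- Consistency: `S_{𝒟_m}(φ) → 0` for every `φ ∈ W_G`. -/
def Consistent (WG : Submodule ℝ L) (G : ↥WG →ₗ[ℝ] Lv)
    {V : Submodule ℝ (StrongDual ℝ L)} {p : ℝ} (D : ℕ → GradDisc L Lv V p) : Prop :=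
  ∀ u : ↥WG, Filter.Tendsto (fun m => (D m).SDdef (u : L) (G u)) Filter.atTop (𝓝 0)

/-- Compactness: bounded discrete sequences have relatively compact reconstructions in `L`. -/
def CompactSeq {V : Submodule ℝ (StrongDual ℝ L)} {p : ℝ} (D : ℕ → GradDisc L Lv V p) : Prop :=
  ∀ u : (m : ℕ) → (D m).X, (∃ C : ℝ, ∀ m : ℕ, (D m).dnorm (u m) ≤ C) →
    IsCompact (closure (Set.range fun m => (D m).P (u m)))

/-!
Coercivity of `𝐚` and `a` makes the discrete form
`a_𝒟(u, v) = ⟨𝐚(G_𝒟 u), G_𝒟 v⟩ + ⟨a(P_𝒟 u), P_𝒟 v⟩` coercive for `‖·‖_𝒟`, hence nondegenerate on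
the finite-dimensional `X_𝒟`: the scheme is uniquely solvable. For the estimates, put
`φ = 𝐚(Gū) + 𝐅`; the weak problem says `Dφ = a(ū) - f`. For any `v ∈ X_𝒟` and `z = u - v`, the
scheme gives
`a_𝒟(z, z) = -(⟨φ, G_𝒟 z⟩ + ⟨Dφ, P_𝒟 z⟩) + ⟨𝐚(Gū - G_𝒟 v), G_𝒟 z⟩ + ⟨a(ū - P_𝒟 v), P_𝒟 z⟩`,
so `α ‖z‖_𝒟 ≤ W_𝒟(φ) + ᾱ (1 + C_𝒟) (‖P_𝒟 v - ū‖ + ‖G_𝒟 v - Gū‖)`. The triangle inequality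
through `v` and the infimum over `v` give both estimates.
-/

lemma Real.sqrt_sq_add_sq_add_le (a b c d : ℝ) :
    √((a + c) ^ 2 + (b + d) ^ 2) ≤ √(a ^ 2 + b ^ 2) + √(c ^ 2 + d ^ 2) := by
  simpa only [Complex.norm_eq_sqrt_sq_add_sq, Complex.add_re, Complex.add_im]
    using norm_add_le (⟨a, b⟩ : ℂ) ⟨c, d⟩

lemma mul_le_of_mul_sq_le_mul {a s K : ℝ} (hs : 0 ≤ s) (hK : 0 ≤ K) (h : a * s ^ 2 ≤ K * s) :
    a * s ≤ K := by
  rcases hs.eq_or_lt with rfl | hs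
  · simpa using hK
  · exact le_of_mul_le_mul_right (by linarith) hs

lemma le_mul_add_mul_sInf_range {ι : Type*} [Nonempty ι] {g : ι → ℝ} {x c A M : ℝ}
    (hc : 0 < c) (hM : 0 < M) (h : ∀ i, x ≤ c * (A + M * g i)) :
    x ≤ c * (A + M * sInf (Set.range g)) := by
  have hinf : (x / c - A) / M ≤ sInf (Set.range g) := by
    refine le_csInf (Set.range_nonempty g) ?_
    rintro _ ⟨i, rfl⟩
    have hi := h i
    rw [← div_le_iff₀' hc] at hi
    rw [div_le_iff₀ hM]
    linarith [mul_comm M (g i)]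
  rw [div_le_iff₀ hM] at hinf
  rw [← div_le_iff₀' hc]
  linarith [mul_comm M (sInf (Set.range g))]

lemma abs_apply_apply_le_of_opNorm_le {E : Type*} [NormedAddCommGroup E] [NormedSpace ℝ E]
    {a : E →L[ℝ] StrongDual ℝ E} {c : ℝ} (ha : ‖a‖ ≤ c) (x y : E) :
    |a x y| ≤ c * ‖x‖ * ‖y‖ := by
  rw [← Real.norm_eq_abs]
  grw [a.le_opNorm₂ x y, ha]

lemma LinearMap.BilinForm.existsUnique_forall_apply_eq {K X : Type*} [Field K] [AddCommGroup X]
    [Module K X] [FiniteDimensional K X] (B : LinearMap.BilinForm K X)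
    (hB : ∀ x, B x x = 0 → x = 0) (l : Module.Dual K X) : ∃! u, ∀ v, B u v = l v := by
  have hnd : B.Nondegenerate := ⟨fun x hx => hB x (hx x), fun y hy => hB y (hy y)⟩
  simpa only [LinearMap.ext_iff, LinearMap.BilinForm.toDual_def]
    using (B.toDual hnd).bijective.existsUnique l

namespace Seminorm

variable {X : Type*} [AddCommGroup X] [Module ℝ X]

def sqrtSqAdd (p q : Seminorm ℝ X) : Seminorm ℝ X :=
  Seminorm.of (fun x => √(p x ^ 2 + q x ^ 2))
    (fun x y => by
      grw [map_add_le_add p x y, map_add_le_add q x y]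
      exact Real.sqrt_sq_add_sq_add_le _ _ _ _)
    (fun c x => by
      simp only [map_smul_eq_mul, mul_pow, ← mul_add, Real.sqrt_mul (sq_nonneg _),
        Real.sqrt_sq (norm_nonneg c)])

end Seminorm

section semV

variable {V : Submodule ℝ (StrongDual ℝ L)}

lemma semV_nonneg (u : L) : 0 ≤ semV V u :=
  Real.sSup_nonneg <| by rintro _ ⟨μ, _, rfl⟩; positivity

lemma div_norm_le_semV {μ : StrongDual ℝ L} (hμ : μ ∈ V) (hμ0 : μ ≠ 0) (u : L) :
    |μ u| / ‖μ‖ ≤ semV V u := by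
  refine le_csSup ⟨‖u‖, ?_⟩ ⟨μ, ⟨hμ, hμ0⟩, rfl⟩
  rintro _ ⟨ν, ⟨-, hν0⟩, rfl⟩
  exact div_le_of_le_mul₀ (norm_nonneg ν) (norm_nonneg u)
    (by rw [mul_comm, ← Real.norm_eq_abs]; exact ν.le_opNorm u)

lemma semV_le_of_forall_le {u : L} {c : ℝ} (hc : 0 ≤ c)
    (h : ∀ μ ∈ V, μ ≠ 0 → |μ u| / ‖μ‖ ≤ c) : semV V u ≤ c :=
  Real.sSup_le (by rintro _ ⟨μ, ⟨hμ, hμ0⟩, rfl⟩; exact h μ hμ hμ0) hc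

variable (V) in
def semVSeminorm : Seminorm ℝ L :=
  Seminorm.ofSMulLE (semV V)
    (le_antisymm (semV_le_of_forall_le le_rfl fun μ _ _ => by simp) (semV_nonneg 0))
    (fun u v => semV_le_of_forall_le (add_nonneg (semV_nonneg u) (semV_nonneg v))
      fun μ hμ hμ0 => by
        grw [map_add, abs_add_le, add_div, div_norm_le_semV hμ hμ0 u, div_norm_le_semV hμ hμ0 v])
    (fun c u => semV_le_of_forall_le (mul_nonneg (norm_nonneg c) (semV_nonneg u)) fun μ hμ hμ0 => by
      rw [map_smul, smul_eq_mul, abs_mul, mul_div_assoc, Real.norm_eq_abs]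
      gcongr
      exact div_norm_le_semV hμ hμ0 u)

end semV

lemma IsWDpair.unique {WG : Submodule ℝ L} {G : ↥WG →ₗ[ℝ] Lv} {φ : StrongDual ℝ Lv}
    {w w' : StrongDual ℝ L} (hWG : Dense (WG : Set L)) (h : IsWDpair WG G φ w)
    (h' : IsWDpair WG G φ w') : w = w' :=
  DFunLike.coe_injective <| Continuous.ext_on hWG w.continuous w'.continuous
    fun x hx => by linarith [h ⟨x, hx⟩, h' ⟨x, hx⟩]

lemma isWDpair_of_weak_solution {WG : Submodule ℝ L} {G : ↥WG →ₗ[ℝ] Lv}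
    {aV : Lv →L[ℝ] StrongDual ℝ Lv} {aS : L →L[ℝ] StrongDual ℝ L}
    {f : StrongDual ℝ L} {F : StrongDual ℝ Lv} {ubar : L} {gubar : Lv}
    (h : ∀ v : ↥WG, aV gubar (G v) + aS ubar (v : L) = f (v : L) - F (G v)) :
    IsWDpair WG G (aV gubar + F) (aS ubar - f) := fun v => by
  simp only [add_apply, sub_apply]
  linarith [h v]

namespace GradDisc

variable {V : Submodule ℝ (StrongDual ℝ L)} (D : GradDisc L Lv V 2)

lemma dnorm_eq_sqrt (v : D.X) : D.dnorm v = √(semV V (D.P v) ^ 2 + ‖D.Gd v‖ ^ 2) := by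
  rw [dnorm, Real.sqrt_eq_rpow, Real.rpow_two, Real.rpow_two]

def dseminorm : Seminorm ℝ D.X :=
  ((semVSeminorm V).comp D.P).sqrtSqAdd ((normSeminorm ℝ Lv).comp D.Gd)

lemma dnorm_eq_dseminorm (v : D.X) : D.dnorm v = D.dseminorm v :=
  D.dnorm_eq_sqrt v

lemma dnorm_nonneg (v : D.X) : 0 ≤ D.dnorm v := by
  rw [dnorm_eq_sqrt]; exact Real.sqrt_nonneg _

lemma sq_dnorm (v : D.X) : D.dnorm v ^ 2 = semV V (D.P v) ^ 2 + ‖D.Gd v‖ ^ 2 := by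
  rw [dnorm_eq_sqrt, Real.sq_sqrt (by positivity)]

lemma norm_Gd_le_dnorm (v : D.X) : ‖D.Gd v‖ ≤ D.dnorm v := by
  rw [dnorm_eq_sqrt]
  exact Real.le_sqrt_of_sq_le (le_add_of_nonneg_left (sq_nonneg _))

lemma dnorm_pos {v : D.X} (hv : v ≠ 0) : 0 < D.dnorm v :=
  (D.dnorm_nonneg v).lt_of_ne' (mt (D.dnorm_definite v) hv)

/-- `dnorm_definite` makes `‖·‖_𝒟` a norm, and all norms on the finite-dimensional `X_𝒟` are
equivalent. -/
lemma exists_norm_le_mul_dnorm {W : Type*} [NormedAddCommGroup W] [NormedSpace ℝ W]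
    (T : D.X →ₗ[ℝ] W) : ∃ C, ∀ v, ‖T v‖ ≤ C * D.dnorm v := by
  let _ : NormedAddCommGroup D.X := AddGroupNorm.toNormedAddCommGroup
    { D.dseminorm.toAddGroupSeminorm with
      eq_zero_of_map_eq_zero' := fun v hv =>
        D.dnorm_definite v ((D.dnorm_eq_dseminorm v).trans hv) }
  let _ : NormedSpace ℝ D.X := ⟨fun c v => (map_smul_eq_mul D.dseminorm c v).le⟩
  refine ⟨‖LinearMap.toContinuousLinearMap T‖, fun v => ?_⟩
  rw [D.dnorm_eq_dseminorm]
  exact (LinearMap.toContinuousLinearMap T).le_opNorm v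

lemma sSup_div_dnorm_nonneg {g : D.X → ℝ} (hg : ∀ v, 0 ≤ g v) :
    0 ≤ sSup ((fun v => g v / D.dnorm v) '' {v | v ≠ 0}) :=
  Real.sSup_nonneg <| by rintro _ ⟨v, -, rfl⟩; exact div_nonneg (hg v) (D.dnorm_nonneg v)

lemma norm_le_sSup_div_dnorm_mul {W : Type*} [NormedAddCommGroup W] [NormedSpace ℝ W]
    (T : D.X →ₗ[ℝ] W) (v : D.X) :
    ‖T v‖ ≤ sSup ((fun v => ‖T v‖ / D.dnorm v) '' {v | v ≠ 0}) * D.dnorm v := by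
  obtain ⟨C, hC⟩ := D.exists_norm_le_mul_dnorm T
  rcases eq_or_ne v 0 with rfl | hv
  · rw [map_zero, norm_zero]
    exact mul_nonneg (D.sSup_div_dnorm_nonneg fun _ => norm_nonneg _) (D.dnorm_nonneg 0)
  · rw [← div_le_iff₀ (D.dnorm_pos hv)]
    refine le_csSup ⟨C, ?_⟩ ⟨v, hv, rfl⟩
    rintro _ ⟨y, hy, rfl⟩
    exact (div_le_iff₀ (D.dnorm_pos hy)).mpr (hC y)

lemma CD_nonneg : 0 ≤ D.CD :=
  D.sSup_div_dnorm_nonneg fun _ => norm_nonneg _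

lemma WDdef_nonneg (φ : StrongDual ℝ Lv) (w : StrongDual ℝ L) : 0 ≤ D.WDdef φ w :=
  D.sSup_div_dnorm_nonneg fun _ => abs_nonneg _

lemma norm_P_le_CD_mul (v : D.X) : ‖D.P v‖ ≤ D.CD * D.dnorm v :=
  D.norm_le_sSup_div_dnorm_mul D.P v

lemma abs_le_WDdef_mul (φ : StrongDual ℝ Lv) (w : StrongDual ℝ L) (v : D.X) :
    |φ (D.Gd v) + w (D.P v)| ≤ D.WDdef φ w * D.dnorm v :=
  D.norm_le_sSup_div_dnorm_mul ((φ : Lv →ₗ[ℝ] ℝ) ∘ₗ D.Gd + (w : L →ₗ[ℝ] ℝ) ∘ₗ D.P) v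

variable {aV : Lv →L[ℝ] StrongDual ℝ Lv} {aS : L →L[ℝ] StrongDual ℝ L} {abar alph : ℝ}
  {f : StrongDual ℝ L} {F : StrongDual ℝ Lv}

variable (aV aS) in
def bilinForm : LinearMap.BilinForm ℝ D.X :=
  (ContinuousLinearMap.toLinearMap₁₂ aV).compl₁₂ D.Gd D.Gd +
    (ContinuousLinearMap.toLinearMap₁₂ aS).compl₁₂ D.P D.P

@[simp]
lemma bilinForm_apply (u v : D.X) :
    D.bilinForm aV aS u v = aV (D.Gd u) (D.Gd v) + aS (D.P u) (D.P v) :=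
  rfl

lemma mul_sq_dnorm_le_bilinForm (hV : ∀ g, alph * ‖g‖ ^ 2 ≤ aV g g)
    (hS : ∀ v, alph * semV V v ^ 2 ≤ aS v v) (v : D.X) :
    alph * D.dnorm v ^ 2 ≤ D.bilinForm aV aS v v := by
  rw [sq_dnorm, bilinForm_apply]
  linarith [hV (D.Gd v), hS (D.P v)]

lemma existsUnique_bilinForm_eq (halph : 0 < alph)
    (hcoer : ∀ v, alph * D.dnorm v ^ 2 ≤ D.bilinForm aV aS v v) (l : Module.Dual ℝ D.X) :
    ∃! u, ∀ v, D.bilinForm aV aS u v = l v :=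
  (D.bilinForm aV aS).existsUnique_forall_apply_eq (fun v hv => D.dnorm_definite v <| by
    show D.dnorm v = 0
    have := hcoer v
    rw [hv] at this
    exact pow_eq_zero_iff two_ne_zero |>.mp (le_antisymm (by nlinarith) (sq_nonneg _))) l

lemma mul_dnorm_sub_le (haV : ‖aV‖ ≤ abar) (haS : ‖aS‖ ≤ abar)
    (hcoer : ∀ v, alph * D.dnorm v ^ 2 ≤ D.bilinForm aV aS v v)
    {u : D.X} (hu : ∀ v, D.bilinForm aV aS u v = f (D.P v) - F (D.Gd v))
    (ubar : L) (gubar : Lv) (v : D.X) :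
    alph * D.dnorm (u - v) ≤ D.WDdef (aV gubar + F) (aS ubar - f) +
      abar * (1 + D.CD) * (‖D.P v - ubar‖ + ‖D.Gd v - gubar‖) := by
  set z := u - v
  have habar : 0 ≤ abar := (norm_nonneg aV).trans haV
  have hCD := D.CD_nonneg
  have hs := D.dnorm_nonneg z
  have hid : D.bilinForm aV aS z z = -((aV gubar + F) (D.Gd z) + (aS ubar - f) (D.P z)) +
      aV (gubar - D.Gd v) (D.Gd z) + aS (ubar - D.P v) (D.P z) := by
    rw [LinearMap.map_sub₂, hu z]
    simp only [bilinForm_apply, map_sub, add_apply, sub_apply]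
    ring
  have hW := D.abs_le_WDdef_mul (aV gubar + F) (aS ubar - f) z
  have hG : |aV (gubar - D.Gd v) (D.Gd z)| ≤ abar * ‖D.Gd v - gubar‖ * D.dnorm z := by
    grw [abs_apply_apply_le_of_opNorm_le haV, norm_sub_rev, D.norm_Gd_le_dnorm]
  have hP : |aS (ubar - D.P v) (D.P z)| ≤ abar * ‖D.P v - ubar‖ * (D.CD * D.dnorm z) := by
    grw [abs_apply_apply_le_of_opNorm_le haS, norm_sub_rev, D.norm_P_le_CD_mul]
  refine mul_le_of_mul_sq_le_mul hs (add_nonneg (D.WDdef_nonneg _ _)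
    (mul_nonneg (mul_nonneg habar (by linarith)) (by positivity))) ?_
  nlinarith [hcoer z, neg_le_abs ((aV gubar + F) (D.Gd z) + (aS ubar - f) (D.P z)),
    le_abs_self (aV (gubar - D.Gd v) (D.Gd z)), le_abs_self (aS (ubar - D.P v) (D.P z)),
    mul_nonneg (mul_nonneg habar (norm_nonneg (D.P v - ubar))) hs,
    mul_nonneg (mul_nonneg (mul_nonneg habar (norm_nonneg (D.Gd v - gubar))) hCD) hs]

lemma norm_sub_Gd_le (halph : 0 < alph) (haV : ‖aV‖ ≤ abar) (haS : ‖aS‖ ≤ abar)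
    (hcoer : ∀ v, alph * D.dnorm v ^ 2 ≤ D.bilinForm aV aS v v)
    {u : D.X} (hu : ∀ v, D.bilinForm aV aS u v = f (D.P v) - F (D.Gd v))
    (ubar : L) (gubar : Lv) :
    ‖gubar - D.Gd u‖ ≤ (1 / alph) * (D.WDdef (aV gubar + F) (aS ubar - f) +
      (abar * (1 + D.CD) + alph) * D.SDdef ubar gubar) := by
  have habar : 0 ≤ abar := (norm_nonneg aV).trans haV
  refine le_mul_add_mul_sInf_range (by positivity)
    (add_pos_of_nonneg_of_pos (mul_nonneg habar (by linarith [D.CD_nonneg])) halph) fun v => ?_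
  have hE := D.mul_dnorm_sub_le haV haS hcoer hu ubar gubar v
  have htri : ‖gubar - D.Gd u‖ ≤ ‖D.Gd v - gubar‖ + D.dnorm (u - v) :=
    calc ‖gubar - D.Gd u‖ ≤ ‖gubar - D.Gd v‖ + ‖D.Gd v - D.Gd u‖ :=
          norm_sub_le_norm_sub_add_norm_sub _ _ _
      _ = ‖D.Gd v - gubar‖ + ‖D.Gd (u - v)‖ := by
          rw [map_sub, norm_sub_rev gubar, norm_sub_rev (D.Gd u)]
      _ ≤ _ := by grw [D.norm_Gd_le_dnorm]
  rw [one_div_mul_eq_div, le_div_iff₀' halph]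
  nlinarith [mul_le_mul_of_nonneg_left htri halph.le, norm_nonneg (D.P v - ubar)]

lemma norm_sub_P_le (halph : 0 < alph) (haV : ‖aV‖ ≤ abar) (haS : ‖aS‖ ≤ abar)
    (hcoer : ∀ v, alph * D.dnorm v ^ 2 ≤ D.bilinForm aV aS v v)
    {u : D.X} (hu : ∀ v, D.bilinForm aV aS u v = f (D.P v) - F (D.Gd v))
    (ubar : L) (gubar : Lv) :
    ‖ubar - D.P u‖ ≤ (1 / alph) * (D.CD * D.WDdef (aV gubar + F) (aS ubar - f) +
      (D.CD * (1 + D.CD) * abar + alph) * D.SDdef ubar gubar) := by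
  have habar : 0 ≤ abar := (norm_nonneg aV).trans haV
  have hCD := D.CD_nonneg
  refine le_mul_add_mul_sInf_range (by positivity)
    (add_pos_of_nonneg_of_pos (mul_nonneg (mul_nonneg hCD (by linarith)) habar) halph)
    fun v => ?_
  have hE := D.mul_dnorm_sub_le haV haS hcoer hu ubar gubar v
  have htri : ‖ubar - D.P u‖ ≤ ‖D.P v - ubar‖ + D.CD * D.dnorm (u - v) :=
    calc ‖ubar - D.P u‖ ≤ ‖ubar - D.P v‖ + ‖D.P v - D.P u‖ :=
          norm_sub_le_norm_sub_add_norm_sub _ _ _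
      _ = ‖D.P v - ubar‖ + ‖D.P (u - v)‖ := by
          rw [map_sub, norm_sub_rev ubar, norm_sub_rev (D.P u)]
      _ ≤ _ := by grw [D.norm_P_le_CD_mul]
  rw [one_div_mul_eq_div, le_div_iff₀' halph]
  nlinarith [mul_le_mul_of_nonneg_left htri halph.le, mul_le_mul_of_nonneg_left hE hCD,
    norm_nonneg (D.Gd v - gubar)]

end GradDisc

theorem linear_gradient_scheme_error_estimates_general
    (WG : Submodule ℝ L) (hWGdense : Dense (WG : Set L))
    (G : ↥WG →ₗ[ℝ] Lv)
    (V : Submodule ℝ (StrongDual ℝ L))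
    (aV : Lv →L[ℝ] StrongDual ℝ Lv) (aS : L →L[ℝ] StrongDual ℝ L)
    (abar : ℝ) (haVnorm : ‖aV‖ ≤ abar) (haSnorm : ‖aS‖ ≤ abar)
    (alph : ℝ) (halph : 0 < alph)
    (haVcoer : ∀ gv : Lv, alph * ‖gv‖ ^ (2:ℝ) ≤ aV gv gv)
    (haScoer : ∀ v : L, alph * semV V v ^ (2:ℝ) ≤ aS v v)
    (f : StrongDual ℝ L) (F : StrongDual ℝ Lv)
    (D : GradDisc L Lv V 2)
    (ubar : ↥WG)
    (hubar : ∀ v : ↥WG,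
      aV (G ubar) (G v) + aS (ubar : L) (v : L) = f (v : L) - F (G v)) :
    (∃! u : D.X, ∀ v : D.X,
        aV (D.Gd u) (D.Gd v) + aS (D.P u) (D.P v) = f (D.P v) - F (D.Gd v)) ∧
    (∀ u : D.X,
      (∀ v : D.X,
        aV (D.Gd u) (D.Gd v) + aS (D.P u) (D.P v) = f (D.P v) - F (D.Gd v)) →
      ∀ w : StrongDual ℝ L, IsWDpair WG G (aV (G ubar) + F) w →
        ‖G ubar - D.Gd u‖ ≤ (1 / alph) *
          (D.WDdef (aV (G ubar) + F) w +
            (abar * (1 + D.CD) + alph) * D.SDdef (ubar : L) (G ubar)) ∧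
        ‖(ubar : L) - D.P u‖ ≤ (1 / alph) *
          (D.CD * D.WDdef (aV (G ubar) + F) w +
            (D.CD * (1 + D.CD) * abar + alph) * D.SDdef (ubar : L) (G ubar))) := by
  have hcoer : ∀ v, alph * D.dnorm v ^ 2 ≤ D.bilinForm aV aS v v :=
    D.mul_sq_dnorm_le_bilinForm (fun g => by simpa only [Real.rpow_two] using haVcoer g)
      (fun v => by simpa only [Real.rpow_two] using haScoer v)
  refine ⟨D.existsUnique_bilinForm_eq halph hcoer
    ((f : L →ₗ[ℝ] ℝ) ∘ₗ D.P - (F : Lv →ₗ[ℝ] ℝ) ∘ₗ D.Gd), fun u hu w hw => ?_⟩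
  obtain rfl : w = aS ubar - f := hw.unique hWGdense (isWDpair_of_weak_solution hubar)
  exact ⟨D.norm_sub_Gd_le halph haVnorm haSnorm hcoer hu _ _,
    D.norm_sub_P_le halph haVnorm haSnorm hcoer hu _ _⟩

theorem linear_gradient_scheme_error_estimates
    [CompleteSpace L] [CompleteSpace Lv]
    [TopologicalSpace.SeparableSpace L] [TopologicalSpace.SeparableSpace Lv]
    (hreflL : Function.Surjective ⇑(inclusionInDoubleDual ℝ L))
    (hreflLv : Function.Surjective ⇑(inclusionInDoubleDual ℝ Lv))
    (WG : Submodule ℝ L) (hWGdense : Dense (WG : Set L))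
    (G : ↥WG →ₗ[ℝ] Lv)
    (hGclosed : IsClosed (Set.range fun u : ↥WG => ((u : L), G u)))
    (V : Submodule ℝ (StrongDual ℝ L)) (hVclosed : IsClosed (V : Set (StrongDual ℝ L)))
    (CWGV : ℝ) (hCWGV : 0 < CWGV)
    (hequiv : ∀ u : ↥WG, (‖(u : L)‖ ^ (2:ℝ) + ‖G u‖ ^ (2:ℝ)) ^ (1/2 : ℝ) ≤
      CWGV * (semV V (u : L) ^ (2:ℝ) + ‖G u‖ ^ (2:ℝ)) ^ (1/2 : ℝ))
    (aV : Lv →L[ℝ] StrongDual ℝ Lv) (aS : L →L[ℝ] StrongDual ℝ L)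
    (abar : ℝ) (haVnorm : ‖aV‖ ≤ abar) (haSnorm : ‖aS‖ ≤ abar)
    (alph : ℝ) (halph : 0 < alph)
    (haVcoer : ∀ gv : Lv, alph * ‖gv‖ ^ (2:ℝ) ≤ aV gv gv)
    (haScoer : ∀ v : L, alph * semV V v ^ (2:ℝ) ≤ aS v v)
    (f : StrongDual ℝ L) (F : StrongDual ℝ Lv)
    (D : GradDisc L Lv V 2)
    (ubar : ↥WG)
    (hubar : ∀ v : ↥WG,
      aV (G ubar) (G v) + aS (ubar : L) (v : L) = f (v : L) - F (G v)) :
    (∃! u : D.X, ∀ v : D.X,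
        aV (D.Gd u) (D.Gd v) + aS (D.P u) (D.P v) = f (D.P v) - F (D.Gd v)) ∧
    (∀ u : D.X,
      (∀ v : D.X,
        aV (D.Gd u) (D.Gd v) + aS (D.P u) (D.P v) = f (D.P v) - F (D.Gd v)) →
      ∀ w : StrongDual ℝ L, IsWDpair WG G (aV (G ubar) + F) w →
        ‖G ubar - D.Gd u‖ ≤ (1 / alph) *
          (D.WDdef (aV (G ubar) + F) w +
            (abar * (1 + D.CD) + alph) * D.SDdef (ubar : L) (G ubar)) ∧
        ‖(ubar : L) - D.P u‖ ≤ (1 / alph) *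
          (D.CD * D.WDdef (aV (G ubar) + F) w +
            (D.CD * (1 + D.CD) * abar + alph) * D.SDdef (ubar : L) (G ubar))) :=
  linear_gradient_scheme_error_estimates_general WG hWGdense G V aV aS abar haVnorm haSnorm alph
    halph haVcoer haScoer f F D ubar hubar
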